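/- arXiv:1505.02441 — 6 statements merged into one kernel-verified Lean document; each statement's English description precedes it below -/
import Mathlib

section
/- Let D be a finite set of points in the Euclidean plane, let D' ⊆ D with t ∈ D', and suppose v is a point with v ∈ V_{D'}(t) but v ∉ V_D(t). Then every point t₀ ∈ D attaining the minimum distance min_{t''∈D} dist(v, t'') satisfies t₀ ∉ D'; moreover dist(v, t₀) < dist(v, t). (In the paper's terms: any vertex of the computed cell that lies outside the true Voronoi cell, when issued as a nearest-neighbor query, returns a tuple not yet collected in D'.) -/
/-- The Voronoi cell of `t` with respect to a finite set `D` of points in the plane. -/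
def voronoiCell (D : Finset (EuclideanSpace ℝ (Fin 2))) (t : EuclideanSpace ℝ (Fin 2)) :
    Set (EuclideanSpace ℝ (Fin 2)) :=
  {q | ∀ t' ∈ D, dist q t ≤ dist q t'}

/-- A point of `V_{D'}(t)` outside `V_D(t)`, when issued as a nearest-neighbor query over
`D`, returns only tuples outside `D'`, which moreover are strictly closer than `t`. -/
theorem failed_vertex_returns_new_tuple
    (D D' : Finset (EuclideanSpace ℝ (Fin 2))) (t : EuclideanSpace ℝ (Fin 2))
    (hD' : D' ⊆ D) (ht : t ∈ D') (v : EuclideanSpace ℝ (Fin 2))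
    (hv₁ : v ∈ voronoiCell D' t) (hv₂ : v ∉ voronoiCell D t) :
    ∀ t₀ ∈ D, (∀ t'' ∈ D, dist v t₀ ≤ dist v t'') → t₀ ∉ D' ∧ dist v t₀ < dist v t := by
  intro t₀ ht₀ hmin
  simp only [voronoiCell, Set.mem_setOf_eq, not_forall] at hv₂
  obtain ⟨t', ht', hlt⟩ := hv₂
  push_neg at hlt
  have hlt' : dist v t₀ < dist v t := lt_of_le_of_lt (hmin t' ht') hlt
  refine ⟨fun h => absurd (hv₁ t₀ h) (not_le.mpr hlt'), hlt'⟩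
end

section
/- There exist a finite set D of points in the Euclidean plane and a point t ∈ D such that the top-2 Voronoi cell V_{2,D}(t) = {q ∈ ℝ² : the number of t' ∈ D with dist(q, t') < dist(q, t) is at most 1} is not a convex set. -/
/-- The top-`k` Voronoi cell of `t` with respect to a finite set `D` of points in the
plane: the locations `q` such that fewer than `k` points of `D` are strictly closer to
`q` than `t` is. -/
def topkVoronoiCell (k : ℕ) (D : Finset (EuclideanSpace ℝ (Fin 2)))
    (t : EuclideanSpace ℝ (Fin 2)) : Set (EuclideanSpace ℝ (Fin 2)) :=
  {q | (D.filter (fun t' => dist q t' < dist q t)).card ≤ k - 1}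

/-!
Take `t = (0, 0)` together with `a = (2, 0)` and `b = (0, 2)`. The top-2 cell of `t` consists of
the points that are not closer to both `a` and `b` than to `t`. Both `(3, 0)` and `(0, 3)` lie in
it, being closer to only one of `a`, `b`, while their midpoint `(3/2, 3/2)` is closer to both.
-/

open Finset

theorem mem_top2VoronoiCell_insert_insert_iff {t a b q : EuclideanSpace ℝ (Fin 2)}
    (hab : a ≠ b) :
    q ∈ topkVoronoiCell 2 {t, a, b} t ↔ ¬ (dist q a < dist q t ∧ dist q b < dist q t) := by
  classical
  simp only [topkVoronoiCell, Set.mem_ofPred_eq, filter_insert, lt_irrefl, if_false,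
    filter_singleton]
  by_cases ha : dist q a < dist q t <;> by_cases hb : dist q b < dist q t <;>
    simp [ha, hb, hab]

theorem EuclideanSpace.dist_lt_dist_iff_fin_two (q a b : EuclideanSpace ℝ (Fin 2)) :
    dist q a < dist q b ↔
      (q 0 - a 0) ^ 2 + (q 1 - a 1) ^ 2 < (q 0 - b 0) ^ 2 + (q 1 - b 1) ^ 2 := by
  rw [EuclideanSpace.dist_eq, EuclideanSpace.dist_eq, Fin.sum_univ_two, Fin.sum_univ_two,
    Real.sqrt_lt_sqrt_iff (by positivity)]
  simp only [Real.dist_eq, sq_abs]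

theorem not_convex_of_midpoint_notMem {E : Type*} [AddCommGroup E] [Module ℝ E] {s : Set E}
    {x y : E} (hx : x ∈ s) (hy : y ∈ s) (hxy : midpoint ℝ x y ∉ s) : ¬ Convex ℝ s :=
  fun hs => hxy (hs.midpoint_mem hx hy)

/-- There is a configuration of points whose top-2 Voronoi cell is not convex. -/
theorem exists_nonconvex_top2VoronoiCell :
    ∃ (D : Finset (EuclideanSpace ℝ (Fin 2))) (t : EuclideanSpace ℝ (Fin 2)),
      t ∈ D ∧ ¬ Convex ℝ (topkVoronoiCell 2 D t) := by
  have hab : (!₂[2, 0] : EuclideanSpace ℝ (Fin 2)) ≠ !₂[0, 2] := fun h => by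
    simpa using congrArg (· 0) h
  have hmid : midpoint ℝ (!₂[3, 0] : EuclideanSpace ℝ (Fin 2)) !₂[0, 3] = !₂[3 / 2, 3 / 2] := by
    ext i; fin_cases i <;> norm_num [midpoint_eq_smul_add]
  refine ⟨{!₂[0, 0], !₂[2, 0], !₂[0, 2]}, !₂[0, 0], mem_insert_self _ _,
    not_convex_of_midpoint_notMem (x := !₂[3, 0]) (y := !₂[0, 3]) ?_ ?_ ?_⟩
  all_goals
    rw [mem_top2VoronoiCell_insert_insert_iff hab, EuclideanSpace.dist_lt_dist_iff_fin_two,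
      EuclideanSpace.dist_lt_dist_iff_fin_two]
  · norm_num
  · norm_num
  · rw [hmid]; norm_num
end

section
/- Let D be a finite set of points in the Euclidean plane, let t ∈ D, let k ≥ 1 be an integer, and let q be a point in the topological frontier (boundary) of the top-k Voronoi cell V_{k,D}(t). Then there exists a point t' ∈ D with t' ≠ t such that dist(q, t') = dist(q, t). -/
/-- Any point on the boundary of the top-`k` Voronoi cell of `t` is equidistant from `t`
and some other tuple of the database. -/
theorem frontier_topkVoronoiCell_tie (k : ℕ) (hk : 1 ≤ k)
    (D : Finset (EuclideanSpace ℝ (Fin 2))) (t : EuclideanSpace ℝ (Fin 2)) (ht : t ∈ D)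
    (q : EuclideanSpace ℝ (Fin 2)) (hq : q ∈ frontier (topkVoronoiCell k D t)) :
    ∃ t' ∈ D, t' ≠ t ∧ dist q t' = dist q t := by
  classical
  by_contra hcon
  push_neg at hcon
  -- the open set where all comparisons are as at q
  set U : Set (EuclideanSpace ℝ (Fin 2)) :=
    ⋂ t' ∈ D.erase t,
      (if dist q t' < dist q t then {q' | dist q' t' < dist q' t}
       else {q' | dist q' t < dist q' t'}) with hU
  have hopen : IsOpen U := by
    apply Set.Finite.isOpen_biInter (D.erase t).finite_toSet
    intro t' _
    split_ifs
    · exact isOpen_lt (Continuous.dist continuous_id continuous_const)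
        (Continuous.dist continuous_id continuous_const)
    · exact isOpen_lt (Continuous.dist continuous_id continuous_const)
        (Continuous.dist continuous_id continuous_const)
  have hqU : q ∈ U := by
    rw [hU]
    refine Set.mem_iInter₂.2 fun t' ht' => ?_
    rcases Finset.mem_erase.1 ht' with ⟨hne, hmem⟩
    split_ifs with h
    · exact h
    · exact lt_of_le_of_ne (not_lt.1 h) fun he => hcon t' hmem hne he.symm
  -- membership in the cell is constant on U
  have hconst : ∀ q' ∈ U, (q' ∈ topkVoronoiCell k D t ↔ q ∈ topkVoronoiCell k D t) := by
    intro q' hq'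
    have hfilt : D.filter (fun t' => dist q' t' < dist q' t)
        = D.filter (fun t' => dist q t' < dist q t) := by
      apply Finset.filter_congr
      intro x hx
      by_cases hxt : x = t
      · subst hxt; simp
      · have hxU := Set.mem_iInter₂.1 hq' x (Finset.mem_erase.2 ⟨hxt, hx⟩)
        have hqq := Set.mem_iInter₂.1 hqU x (Finset.mem_erase.2 ⟨hxt, hx⟩)
        split_ifs at hxU hqq with h
        · simp only [Set.mem_setOf_eq] at hxU
          simp [hxU, h]
        · simp only [Set.mem_setOf_eq] at hxU
          simp [not_lt.2 hxU.le, h]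
    simp [topkVoronoiCell, hfilt]
  rcases hq with ⟨hcl, hnint⟩
  by_cases hm : q ∈ topkVoronoiCell k D t
  · exact hnint (mem_interior.2 ⟨U, fun q' hq' => (hconst q' hq').2 hm, hopen, hqU⟩)
  · rcases mem_closure_iff.1 hcl U hopen hqU with ⟨x, hxU, hxcell⟩
    exact hm ((hconst x hxU).1 hxcell)
end

section
/- Let D be a nonempty finite set of points in the Euclidean plane, let B ⊆ ℝ² be a measurable region of finite Lebesgue measure, and for each t ∈ D let W(t) = V_D(t) ∩ B. Assume each W(t) has positive finite Lebesgue measure, and assume that the set of points q ∈ B admitting more than one nearest point in D has Lebesgue measure zero. For q having a unique nearest point in D, write t_q for that nearest point. Then for every weight function Q : D → ℝ, the integral over B of the function q ↦ Q(t_q)/vol(W(t_q)) equals Σ_{t∈D} Q(t). In particular (taking Q ≡ 1), the integral over B of q ↦ 1/vol(W(t_q)) equals |D|, so the estimator r = 1/p(t_q) with p(t) = vol(W(t))/vol(B) satisfies E[r] = |D| when q is drawn uniformly from B. -/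
/-! Off the null set of ties, `nq` equals `t` on all of `W t`, and the sets `W t` cover `B` and
overlap only in ties. The integral therefore splits as
`∑ t ∈ D, vol (W t) * (Q t / vol (W t)) = ∑ t ∈ D, Q t`. -/

open MeasureTheory Function

section FinsetUnion

variable {X E ι : Type*} [MeasurableSpace X] [NormedAddCommGroup E] [NormedSpace ℝ E]
  {μ : Measure X}

theorem integral_biUnion_finset₀ {f : X → E} (t : Finset ι) {s : ι → Set X}
    (hs : ∀ i ∈ t, NullMeasurableSet (s i) μ) (hd : (t : Set ι).Pairwise (AEDisjoint μ on s))
    (hf : ∀ i ∈ t, IntegrableOn f (s i) μ) :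
    ∫ x in ⋃ i ∈ t, s i, f x ∂μ = ∑ i ∈ t, ∫ x in s i, f x ∂μ := by
  rw [← Finset.set_biUnion_coe, Set.biUnion_eq_iUnion, ← Finset.sum_coe_sort t,
    ← tsum_fintype (L := .unconditional _)]
  exact integral_iUnion_ae (fun i => hs i i.2)
    (fun i j hij => hd i.2 j.2 (Subtype.coe_ne_coe.2 hij))
    (integrableOn_finite_iUnion.2 fun i => hf i i.2)

theorem setIntegral_biUnion_finset_eq_sum_of_ae_eq_const [CompleteSpace E] {f : X → E}
    {c : ι → E} (t : Finset ι) {s : ι → Set X}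
    (hs : ∀ i ∈ t, NullMeasurableSet (s i) μ) (hd : (t : Set ι).Pairwise (AEDisjoint μ on s))
    (hfin : ∀ i ∈ t, μ (s i) ≠ ⊤) (hf : ∀ i ∈ t, f =ᵐ[μ.restrict (s i)] fun _ => c i) :
    ∫ x in ⋃ i ∈ t, s i, f x ∂μ = ∑ i ∈ t, μ.real (s i) • c i := by
  rw [integral_biUnion_finset₀ t hs hd fun i hi =>
    (integrableOn_const (hfin i hi)).congr_fun_ae (hf i hi).symm]
  refine Finset.sum_congr rfl fun i hi => ?_
  rw [integral_congr_ae (hf i hi), setIntegral_const]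

end FinsetUnion

section Voronoi

local notation "ℝ²" => EuclideanSpace ℝ (Fin 2)

variable {D : Finset ℝ²}

def voronoiTies (D : Finset ℝ²) : Set ℝ² :=
  {q | ∃ t₁ ∈ D, ∃ t₂ ∈ D, t₁ ≠ t₂ ∧ q ∈ voronoiCell D t₁ ∧ q ∈ voronoiCell D t₂}

theorem isClosed_voronoiCell (D : Finset ℝ²) (t : ℝ²) : IsClosed (voronoiCell D t) := by
  simp only [voronoiCell, Set.ofPred_forall]
  exact isClosed_iInter fun t' => isClosed_iInter fun _ =>
    isClosed_le (by fun_prop) (by fun_prop)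

theorem iUnion_voronoiCell_eq_univ (hD : D.Nonempty) : ⋃ t ∈ D, voronoiCell D t = Set.univ := by
  refine Set.eq_univ_of_forall fun q => ?_
  obtain ⟨t, ht, hmin⟩ := D.exists_min_image (dist q) hD
  exact Set.mem_biUnion ht hmin

variable {μ : Measure ℝ²} {B : Set ℝ²}

theorem aeDisjoint_voronoiCell_inter (hties : μ (B ∩ voronoiTies D) = 0) {t₁ t₂ : ℝ²}
    (h₁ : t₁ ∈ D) (h₂ : t₂ ∈ D) (hne : t₁ ≠ t₂) :
    AEDisjoint μ (voronoiCell D t₁ ∩ B) (voronoiCell D t₂ ∩ B) := by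
  refine measure_mono_null (fun q hq => ?_) hties
  obtain ⟨⟨hq₁, hqB⟩, hq₂, -⟩ := hq
  exact ⟨hqB, t₁, h₁, t₂, h₂, hne, hq₁, hq₂⟩

theorem ae_restrict_voronoiCell_inter_eq_const (hB : MeasurableSet B)
    (hties : μ (B ∩ voronoiTies D) = 0) {nq : ℝ² → ℝ²}
    (hnq : ∀ q ∈ B, nq q ∈ D ∧ q ∈ voronoiCell D (nq q)) {t : ℝ²} (ht : t ∈ D) :
    nq =ᵐ[μ.restrict (voronoiCell D t ∩ B)] fun _ => t := by
  rw [Filter.EventuallyEq, ae_restrict_iff' ((isClosed_voronoiCell D t).measurableSet.inter hB)]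
  filter_upwards [measure_eq_zero_iff_ae_notMem.1 hties] with q hq ⟨hqt, hqB⟩
  by_contra hne
  exact hq ⟨hqB, nq q, (hnq q hqB).1, t, ht, hne, (hnq q hqB).2, hqt⟩

end Voronoi

theorem integral_inv_prob_estimator_eq_sum_general
    (D : Finset (EuclideanSpace ℝ (Fin 2))) (hDne : D.Nonempty)
    (B : Set (EuclideanSpace ℝ (Fin 2))) (hBmeas : MeasurableSet B)
    (W : EuclideanSpace ℝ (Fin 2) → Set (EuclideanSpace ℝ (Fin 2)))
    (hW : ∀ t ∈ D, W t = voronoiCell D t ∩ B)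
    (hWpos : ∀ t ∈ D, 0 < volume (W t)) (hWfin : ∀ t ∈ D, volume (W t) < ⊤)
    (hties : volume {q ∈ B | ∃ t₁ ∈ D, ∃ t₂ ∈ D, t₁ ≠ t₂ ∧
      (∀ t' ∈ D, dist q t₁ ≤ dist q t') ∧ (∀ t' ∈ D, dist q t₂ ≤ dist q t')} = 0)
    (nq : EuclideanSpace ℝ (Fin 2) → EuclideanSpace ℝ (Fin 2))
    (hnq : ∀ q ∈ B, nq q ∈ D ∧ ∀ t' ∈ D, dist q (nq q) ≤ dist q t')
    (Q : EuclideanSpace ℝ (Fin 2) → ℝ) :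
    ∫ q in B, Q (nq q) / (volume (W (nq q))).toReal = ∑ t ∈ D, Q t := by
  have hties : volume (B ∩ voronoiTies D) = 0 := hties
  have hcover : ⋃ t ∈ D, W t = B := by
    rw [← Set.univ_inter B, ← iUnion_voronoiCell_eq_univ hDne, Set.iUnion₂_inter]
    exact Set.iUnion₂_congr hW
  rw [← hcover, setIntegral_biUnion_finset_eq_sum_of_ae_eq_const D
    (c := fun t => Q t / (volume (W t)).toReal)]
  · refine Finset.sum_congr rfl fun t ht => ?_
    rw [measureReal_def, smul_eq_mul,
      mul_div_cancel₀ _ (ENNReal.toReal_ne_zero.2 ⟨(hWpos t ht).ne', (hWfin t ht).ne⟩)]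
  · intro t ht
    rw [hW t ht]
    exact ((isClosed_voronoiCell D t).measurableSet.inter hBmeas).nullMeasurableSet
  · intro t₁ h₁ t₂ h₂ hne
    rw [onFun, hW t₁ h₁, hW t₂ h₂]
    exact aeDisjoint_voronoiCell_inter hties h₁ h₂ hne
  · exact fun t ht => (hWfin t ht).ne
  · intro t ht
    filter_upwards [hW t ht ▸ ae_restrict_voronoiCell_inter_eq_const hBmeas hties hnq ht]
      with q hq
    rw [hq]

/-- Unbiasedness of the inverse-probability estimator (equation (1) of the paper):
if `nq q` denotes the nearest point of `D` to `q` (unique off a null set of ties),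
and `W t = V_D(t) ∩ B`, then `∫_B Q(nq q) / vol(W (nq q)) dq = Σ_{t ∈ D} Q t`. -/
theorem integral_inv_prob_estimator_eq_sum
    (D : Finset (EuclideanSpace ℝ (Fin 2))) (hDne : D.Nonempty)
    (B : Set (EuclideanSpace ℝ (Fin 2))) (hBmeas : MeasurableSet B)
    (hBfin : volume B < ⊤)
    (W : EuclideanSpace ℝ (Fin 2) → Set (EuclideanSpace ℝ (Fin 2)))
    (hW : ∀ t ∈ D, W t = voronoiCell D t ∩ B)
    (hWpos : ∀ t ∈ D, 0 < volume (W t)) (hWfin : ∀ t ∈ D, volume (W t) < ⊤)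
    (hties : volume {q ∈ B | ∃ t₁ ∈ D, ∃ t₂ ∈ D, t₁ ≠ t₂ ∧
      (∀ t' ∈ D, dist q t₁ ≤ dist q t') ∧ (∀ t' ∈ D, dist q t₂ ≤ dist q t')} = 0)
    (nq : EuclideanSpace ℝ (Fin 2) → EuclideanSpace ℝ (Fin 2))
    (hnq : ∀ q ∈ B, nq q ∈ D ∧ ∀ t' ∈ D, dist q (nq q) ≤ dist q t')
    (Q : EuclideanSpace ℝ (Fin 2) → ℝ) :
    ∫ q in B, Q (nq q) / (volume (W (nq q))).toReal = ∑ t ∈ D, Q t :=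
  integral_inv_prob_estimator_eq_sum_general D hDne B hBmeas W hW hWpos hWfin hties nq hnq Q
end

section
/- Let V be a compact convex subset of the Euclidean plane, let t ∈ V, and let d, ε be real numbers with 0 < ε < d. Let V′ be a convex subset of V with t ∈ V′. Suppose that for every extreme point v of V one has dist(t, v) ≥ d, and there exists a point v′ ∈ V′ lying on the segment [t, v] with dist(t, v) − dist(t, v′) ≤ ε. Then the Lebesgue measures satisfy ((d − ε)/d)² · vol(V) ≤ vol(V′) ≤ vol(V). -/
open MeasureTheory

/-- Corollary 3 of the paper: if `V'` is an inner approximation of the compact convex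
cell `V` of `t` such that every extreme point `v` of `V` is at distance at least `d`
from `t` and the segment `[t, v]` contains a point of `V'` within distance `ε` of `v`
(measured along the segment from `t`), then
`((d − ε)/d)² · vol(V) ≤ vol(V') ≤ vol(V)`. -/
theorem volume_ratio_inner_approx (V V' : Set (EuclideanSpace ℝ (Fin 2)))
    (hVc : IsCompact V) (hVconv : Convex ℝ V)
    (t : EuclideanSpace ℝ (Fin 2)) (ht : t ∈ V)
    (d ε : ℝ) (hε : 0 < ε) (hεd : ε < d)
    (hV' : V' ⊆ V) (hV'conv : Convex ℝ V') (htV' : t ∈ V')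
    (hvert : ∀ v ∈ V.extremePoints ℝ, d ≤ dist t v ∧
      ∃ v' ∈ V', v' ∈ segment ℝ t v ∧ dist t v - dist t v' ≤ ε) :
    ((d - ε) / d) ^ 2 * (volume V).toReal ≤ (volume V').toReal ∧
      (volume V').toReal ≤ (volume V).toReal := by
  have hd : (0 : ℝ) < d := hε.trans hεd
  set c : ℝ := (d - ε) / d with hcdef
  have hc0 : 0 < c := div_pos (by linarith) hd
  have hc1 : c ≤ 1 := by rw [div_le_one hd]; linarith
  have hVfin : volume V ≠ ⊤ := hVc.measure_lt_top.ne
  refine ⟨?_, ENNReal.toReal_mono hVfin (measure_mono hV')⟩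
  set f := AffineMap.homothety t c with hfdef
  -- every extreme point's homothety image lies in V'
  have key : ∀ v ∈ V.extremePoints ℝ, f v ∈ V' := by
    intro v hv
    obtain ⟨hdv, v', hv'V', hseg, hdist⟩ := hvert v hv
    obtain ⟨a, b, ha, hb, hab, hv'⟩ := hseg
    have hvt : dist t v ≠ 0 := (hd.trans_le hdv).ne'
    have hdv' : dist t v' = b * dist t v := by
      have : v' - t = b • (v - t) := by
        rw [← hv']
        have : a = 1 - b := by linarith
        rw [this]
        module
      rw [dist_comm t v', dist_eq_norm, this, norm_smul, Real.norm_of_nonneg hb,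
        dist_comm t v, dist_eq_norm]
    -- c ≤ b
    have hcb : c ≤ b := by
      have hD : d ≤ dist t v := hdv
      have h1 : dist t v - b * dist t v ≤ ε := by rw [hdv'] at hdist; linarith
      rw [hcdef, div_le_iff₀ hd]
      nlinarith [dist_nonneg (x := t) (y := v)]
    have hb0 : 0 < b := lt_of_lt_of_le hc0 hcb
    -- f v is on the segment from t to v'
    have hfv : f v = (1 - c / b) • t + (c / b) • v' := by
      rw [hfdef, AffineMap.homothety_apply, ← hv']
      have : a = 1 - b := by linarith
      rw [this]
      simp only [vsub_eq_sub, vadd_eq_add]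
      have hbne : b ≠ 0 := hb0.ne'
      match_scalars <;> field_simp <;> ring
    rw [hfv]
    exact hV'conv htV' hv'V' (by
        have : c / b ≤ 1 := (div_le_one hb0).2 hcb
        linarith [div_nonneg hc0.le hb0.le])
      (div_nonneg hc0.le hb0.le) (by ring)
  -- homothety image of V lies in closure V'
  have himg : f '' V ⊆ closure V' := by
    conv_lhs => rw [← closure_convexHull_extremePoints hVc hVconv]
    refine (image_closure_subset_closure_image
      (AffineMap.homothety_continuous t c)).trans ?_
    apply closure_mono
    rw [AffineMap.image_convexHull]
    refine convexHull_min ?_ hV'conv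
    rintro x ⟨v, hv, rfl⟩
    exact key v hv
  -- volume of homothety image
  have hvol : volume (f '' V) = ENNReal.ofReal (c ^ 2) * volume V := by
    rw [hfdef, Measure.addHaar_image_homothety, finrank_euclideanSpace_fin,
      abs_of_nonneg (by positivity : (0:ℝ) ≤ c ^ 2)]
  -- closure V' has the same volume as V'
  have hclos : volume (closure V') = volume V' := by
    refine le_antisymm ?_ (measure_mono subset_closure)
    calc volume (closure V') ≤ volume (V' ∪ frontier V') := by
          apply measure_mono
          intro x hx
          by_cases h : x ∈ V'
          · exact Or.inl h
          · exact Or.inr ⟨hx, fun h' => h (interior_subset h')⟩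
      _ ≤ volume V' + volume (frontier V') := measure_union_le _ _
      _ = volume V' := by rw [hV'conv.addHaar_frontier volume, add_zero]
  have hfin' : volume V' ≠ ⊤ :=
    ((measure_mono hV').trans_lt hVc.measure_lt_top).ne
  have hmono : volume (f '' V) ≤ volume V' := by
    rw [← hclos]
    exact measure_mono himg
  have := ENNReal.toReal_mono hfin' hmono
  rw [hvol, ENNReal.toReal_mul, ENNReal.toReal_ofReal (by positivity)] at this
  exact this
end

section
/- Let D be a finite set of points in the Euclidean plane, let t ∈ D, and let S be a set of points such that for every v ∈ S the open ball centered at v of radius dist(v, t) contains no point of D. If q is a point such that the open ball centered at q of radius dist(q, t) is contained in the union ⋃_{v∈S} of the open balls centered at v of radius dist(v, t), then q belongs to the Voronoi cell V_D(t), i.e., dist(q, t) ≤ dist(q, t') for all t' ∈ D. -/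
/-- Correctness of the lower-bound-region optimization: if each ball `C(v, t)` for
`v ∈ S` contains no point of `D`, and the ball `C(q, t)` is covered by the union of
those balls, then `q` lies in the Voronoi cell of `t`. -/
theorem covered_ball_in_voronoiCell (D : Finset (EuclideanSpace ℝ (Fin 2)))
    (t : EuclideanSpace ℝ (Fin 2)) (ht : t ∈ D)
    (S : Set (EuclideanSpace ℝ (Fin 2)))
    (hS : ∀ v ∈ S, ∀ t' ∈ D, t' ∉ Metric.ball v (dist v t))
    (q : EuclideanSpace ℝ (Fin 2))
    (hq : Metric.ball q (dist q t) ⊆ ⋃ v ∈ S, Metric.ball v (dist v t)) :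
    q ∈ voronoiCell D t := by
  intro t' ht'
  by_contra h
  push_neg at h
  have : t' ∈ Metric.ball q (dist q t) := by
    simpa [Metric.mem_ball, dist_comm] using h
  obtain ⟨v, hv, hmem⟩ := Set.mem_iUnion₂.mp (hq this)
  exact hS v hv t' ht' hmem
end
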